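/- Let W be the closure in 𝔬̂ of the image of 𝔬^* under the diagonal embedding. Define an equivalence relation on 𝔬̂ by x ∼ y iff x = w·y for some w ∈ W, and for each m ∈ 𝔬^× define an equivalence relation on 𝔬/(m) by a ∼ b iff a = ū·b for the image ū in 𝔬/(m) of some u ∈ 𝔬^*. Then the natural map from the quotient space 𝔬̂/∼ (with the quotient topology) to the inverse limit lim_m (𝔬/(m))/∼ (with the subspace topology from the product of the finite discrete quotient sets, the bonding maps being induced by the canonical projections p_{m,lm}), which sends the class of (r_m)_m to the family of classes of the r_m, is a well-defined homeomorphism. -/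

import Mathlib

set_option synthInstance.maxHeartbeats 1000000
set_option maxHeartbeats 1000000

/-! The profinite completion `R̂` of an integral domain `R` (not a field, with all
nonzero principal ideals of finite index) is a compact topological space. -/

/-- The index set `R^× = R \ {0}`. -/
abbrev Rx (R : Type*) [CommRing R] := {m : R // m ≠ 0}

/-- Each finite quotient `R/(m)` carries the discrete topology. -/
instance quotTop (R : Type*) [CommRing R] (m : R) :
    TopologicalSpace (R ⧸ Ideal.span {m}) := ⊥

theorem span_mul_le (R : Type*) [CommRing R] (l m : R) :
    Ideal.span {l * m} ≤ Ideal.span {m} :=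
  Ideal.span_singleton_le_span_singleton.mpr (dvd_mul_left m l)

/-- The profinite completion `R̂` of `R`, as a subring of the product of the
quotients `R/(m)`, `m ∈ R^×`, consisting of the compatible families. -/
def Rhat (R : Type*) [CommRing R] [IsDomain R] :
    Subring (∀ m : Rx R, R ⧸ Ideal.span {(m : R)}) where
  carrier := {x | ∀ l m : Rx R,
    Ideal.Quotient.factor (span_mul_le R l m)
      (x ⟨(l : R) * m, mul_ne_zero l.2 m.2⟩) = x m}
  mul_mem' {a b} ha hb := by
    intro l m
    rw [Pi.mul_apply, Pi.mul_apply, map_mul, ha l m, hb l m]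
  one_mem' := by
    intro l m
    rw [Pi.one_apply, Pi.one_apply, map_one]
  add_mem' {a b} ha hb := by
    intro l m
    rw [Pi.add_apply, Pi.add_apply, map_add, ha l m, hb l m]
  zero_mem' := by
    intro l m
    rw [Pi.zero_apply, Pi.zero_apply, map_zero]
  neg_mem' {a} ha := by
    intro l m
    rw [Pi.neg_apply, Pi.neg_apply, map_neg, ha l m]

/-- The diagonal map `R → R̂`, `r ↦ (r + (m))_m`, as a ring homomorphism. -/
def diagHom (R : Type*) [CommRing R] [IsDomain R] : R →+* Rhat R :=
  (Pi.ringHom fun m : Rx R => Ideal.Quotient.mk (Ideal.span {(m : R)})).codRestrict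
    (Rhat R) (fun r l m => by
      first
        | simp only [Pi.ringHom_apply, Ideal.Quotient.factor_mk]
        | rfl
        | simp [Rhat, Pi.ringHom_apply, Ideal.Quotient.factor_mk])
open NumberField

/-- The closure `W` in `𝔬̂` of the image of the unit group `𝔬^*` under the diagonal
embedding. -/
def Wclosure (K : Type*) [Field K] [NumberField K] : Set (Rhat (𝓞 K)) :=
  closure (Set.range fun u : (𝓞 K)ˣ => diagHom (𝓞 K) (u : 𝓞 K))
/-- The equivalence relation on `𝔬̂`: `x ∼ y` iff `x = w·y` for some `w ∈ W`. -/
def relHat (K : Type*) [Field K] [NumberField K] (x y : Rhat (𝓞 K)) : Prop :=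
  ∃ w ∈ Wclosure K, x = w * y

/-- The equivalence relation on `𝔬/(m)`: `a ∼ b` iff `a = ū·b` for the image `ū` of
some unit `u ∈ 𝔬^*`. -/
def relCoset (K : Type*) [Field K] [NumberField K] (m : Rx (𝓞 K))
    (a b : 𝓞 K ⧸ Ideal.span {(m : 𝓞 K)}) : Prop :=
  ∃ u : (𝓞 K)ˣ, a = Ideal.Quotient.mk (Ideal.span {(m : 𝓞 K)}) (u : 𝓞 K) * b

/-- The bonding map `(𝔬/(lm))/∼ → (𝔬/(m))/∼` induced by the canonical projection
`p_{m,lm}`. -/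
def qmap (K : Type*) [Field K] [NumberField K] (l m : Rx (𝓞 K)) :
    Quot (relCoset K ⟨(l : 𝓞 K) * m, mul_ne_zero l.2 m.2⟩) → Quot (relCoset K m) :=
  Quot.map (Ideal.Quotient.factor (span_mul_le (𝓞 K) l m))
    (by
      rintro a b ⟨u, rfl⟩
      exact ⟨u, by rw [map_mul, Ideal.Quotient.factor_mk]⟩)

/-- The inverse limit `lim_m (𝔬/(m))/∼` of the quotients of the finite discrete sets
`𝔬/(m)`, with the subspace topology from the product. -/
def Linv (K : Type*) [Field K] [NumberField K] : Type _ :=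
  {f : ∀ m : Rx (𝓞 K), Quot (relCoset K m) //
    ∀ l m : Rx (𝓞 K), qmap K l m (f ⟨(l : 𝓞 K) * m, mul_ne_zero l.2 m.2⟩) = f m}

instance (K : Type*) [Field K] [NumberField K] : TopologicalSpace (Linv K) :=
  instTopologicalSpaceSubtype

section Aux

variable {K : Type*} [Field K] [NumberField K]

instance discreteQuot (R : Type*) [CommRing R] (m : R) :
    DiscreteTopology (R ⧸ Ideal.span {m}) := ⟨rfl⟩

instance finiteQuot (m : Rx (𝓞 K)) : Finite (𝓞 K ⧸ Ideal.span {(m : 𝓞 K)}) := by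
  have : Finite (𝓞 K ⧸ Ideal.span {(m : 𝓞 K)}) :=
    Ideal.finiteQuotientOfFreeOfNeBot _ (by simpa [Ideal.span_singleton_eq_bot] using m.2)
  exact this

instance discreteQuotCoset (m : Rx (𝓞 K)) : DiscreteTopology (Quot (relCoset K m)) :=
  discreteTopology_iff_forall_isOpen.mpr fun _ => isOpen_coinduced.mpr (isOpen_discrete _)

theorem isClosed_Rhat : IsClosed ((Rhat (𝓞 K) : Set (∀ m : Rx (𝓞 K), 𝓞 K ⧸ Ideal.span {(m : 𝓞 K)}))) := by
  have : (Rhat (𝓞 K) : Set (∀ m : Rx (𝓞 K), 𝓞 K ⧸ Ideal.span {(m : 𝓞 K)})) =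
      ⋂ (l : Rx (𝓞 K)) (m : Rx (𝓞 K)),
        {x | Ideal.Quotient.factor (span_mul_le (𝓞 K) l m)
          (x ⟨(l : 𝓞 K) * m, mul_ne_zero l.2 m.2⟩) = x m} := by
    ext x
    simp only [Set.mem_iInter, Set.mem_setOf_eq, SetLike.mem_coe]
    rfl
  rw [this]
  refine isClosed_iInter fun l => isClosed_iInter fun m => ?_
  exact isClosed_eq (Continuous.comp continuous_of_discreteTopology (continuous_apply _))
    (continuous_apply _)

instance : CompactSpace (Rhat (𝓞 K)) :=
  isCompact_iff_compactSpace.mp (isClosed_Rhat (K := K)).isCompact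

instance : Nonempty (Rx (𝓞 K)) := ⟨⟨1, one_ne_zero⟩⟩

instance : CompactSpace (Quot (relHat K)) := by
  constructor
  have h : Set.range (Quot.mk (relHat K)) = Set.univ :=
    Set.range_eq_univ.mpr Quot.mk_surjective
  rw [← h]
  exact isCompact_range continuous_quot_mk

instance : T2Space (Linv K) :=
  inferInstanceAs (T2Space {f : ∀ m : Rx (𝓞 K), Quot (relCoset K m) //
    ∀ l m : Rx (𝓞 K), qmap K l m (f ⟨(l : 𝓞 K) * m, mul_ne_zero l.2 m.2⟩) = f m})

/-- Components of elements of the closure of the units are images of units. -/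
theorem exists_unit_of_mem_Wclosure {w : Rhat (𝓞 K)} (hw : w ∈ Wclosure K)
    (m : Rx (𝓞 K)) :
    ∃ u : (𝓞 K)ˣ, w.1 m = Ideal.Quotient.mk (Ideal.span {(m : 𝓞 K)}) (u : 𝓞 K) := by
  have hcont : Continuous fun x : Rhat (𝓞 K) => x.1 m :=
    (continuous_apply m).comp continuous_subtype_val
  have hmaps : Set.MapsTo (fun x : Rhat (𝓞 K) => x.1 m)
      (Set.range fun u : (𝓞 K)ˣ => diagHom (𝓞 K) (u : 𝓞 K))
      (Set.range fun u : (𝓞 K)ˣ =>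
        Ideal.Quotient.mk (Ideal.span {(m : 𝓞 K)}) (u : 𝓞 K)) := by
    rintro _ ⟨u, rfl⟩
    exact ⟨u, rfl⟩
  have := map_mem_closure hcont hw hmaps
  rw [IsClosed.closure_eq (isClosed_discrete _)] at this
  obtain ⟨u, hu⟩ := this
  exact ⟨u, hu.symm⟩

theorem relCoset_equivalence (m : Rx (𝓞 K)) : Equivalence (relCoset K m) := by
  constructor
  · exact fun a => ⟨1, by simp⟩
  · rintro a b ⟨u, rfl⟩
    exact ⟨u⁻¹, by rw [← mul_assoc, ← map_mul, Units.inv_mul, map_one, one_mul]⟩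
  · rintro a b c ⟨u, rfl⟩ ⟨v, rfl⟩
    exact ⟨u * v, by rw [← mul_assoc, ← map_mul, Units.val_mul]⟩

/-- Compatibility of elements of `Rhat` along any factorization of the index. -/
theorem Rhat_proj_eq (x : Rhat (𝓞 K)) (l m n : Rx (𝓞 K)) (hn : (n : 𝓞 K) = l * m)
    (h : Ideal.span {(n : 𝓞 K)} ≤ Ideal.span {(m : 𝓞 K)}) :
    Ideal.Quotient.factor h (x.1 n) = x.1 m := by
  obtain ⟨nv, hnv⟩ := n
  simp only at hn
  subst hn
  exact x.2 l m

/-- The underlying map `Rhat → Linv`. -/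
def Gfun (K : Type*) [Field K] [NumberField K] (x : Rhat (𝓞 K)) : Linv K :=
  ⟨fun m => Quot.mk _ (x.1 m), fun l m => congrArg (Quot.mk _) (x.2 l m)⟩

theorem Gfun_wd (x y : Rhat (𝓞 K)) (hxy : relHat K x y) : Gfun K x = Gfun K y := by
  obtain ⟨w, hwW, rfl⟩ := hxy
  refine Subtype.ext (funext fun m => ?_)
  obtain ⟨u, hu⟩ := exists_unit_of_mem_Wclosure hwW m
  exact Quot.sound ⟨u, by rw [← hu]; rfl⟩

theorem Linv_compat (f : Linv K) (l m n : Rx (𝓞 K)) (hn : (n : 𝓞 K) = l * m)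
    (x : Rhat (𝓞 K)) (hx : Quot.mk (relCoset K n) (x.1 n) = f.1 n) :
    Quot.mk (relCoset K m) (x.1 m) = f.1 m := by
  obtain ⟨nv, hnv⟩ := n
  simp only at hn
  subst hn
  have h1 : qmap K l m (Quot.mk _ (x.1 ⟨(l : 𝓞 K) * m, mul_ne_zero l.2 m.2⟩)) =
      Quot.mk (relCoset K m) (x.1 m) := congrArg (Quot.mk _) (x.2 l m)
  rw [← h1, hx]
  exact f.2 l m

theorem Gfun_injective (x y : Rhat (𝓞 K))
    (h : ∀ m, Quot.mk (relCoset K m) (x.1 m) = Quot.mk (relCoset K m) (y.1 m)) :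
    relHat K x y := by
  have hm : ∀ m : Rx (𝓞 K), relCoset K m (x.1 m) (y.1 m) := fun m =>
    ((relCoset_equivalence m).eqvGen_iff).mp (Quot.eq.mp (h m))
  set C : Rx (𝓞 K) → Set (Rhat (𝓞 K)) := fun m =>
    Wclosure K ∩ {w | x.1 m = w.1 m * y.1 m} with hC
  have hsub : ∀ (l m n : Rx (𝓞 K)), (n : 𝓞 K) = l * m → C n ⊆ C m := by
    rintro l m n hn w ⟨hwW, hwe⟩
    refine ⟨hwW, ?_⟩
    have hle : Ideal.span {(n : 𝓞 K)} ≤ Ideal.span {(m : 𝓞 K)} :=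
      Ideal.span_singleton_le_span_singleton.mpr ⟨l, by rw [hn, mul_comm]⟩
    have := congrArg (Ideal.Quotient.factor hle) hwe
    rwa [map_mul, Rhat_proj_eq x l m n hn, Rhat_proj_eq w l m n hn,
      Rhat_proj_eq y l m n hn] at this
  have hdir : Directed (· ⊇ ·) C := by
    intro m₁ m₂
    refine ⟨⟨(m₁ : 𝓞 K) * m₂, mul_ne_zero m₁.2 m₂.2⟩, ?_, ?_⟩
    · exact hsub m₂ m₁ _ (mul_comm _ _)
    · exact hsub m₁ m₂ _ rfl
  have hne : ∀ m, (C m).Nonempty := by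
    intro m
    obtain ⟨u, hu⟩ := hm m
    exact ⟨diagHom (𝓞 K) (u : 𝓞 K), subset_closure ⟨u, rfl⟩, hu⟩
  have hcl : ∀ m, IsClosed (C m) := by
    intro m
    refine IsClosed.inter isClosed_closure ?_
    have : {w : Rhat (𝓞 K) | x.1 m = w.1 m * y.1 m} =
        (fun w : Rhat (𝓞 K) => w.1 m) ⁻¹' {z | x.1 m = z * y.1 m} := rfl
    rw [this]
    exact IsClosed.preimage ((continuous_apply m).comp continuous_subtype_val)
      (isClosed_discrete _)
  have : (⋂ m, C m).Nonempty :=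
    IsCompact.nonempty_iInter_of_directed_nonempty_isCompact_isClosed C hdir hne
      (fun m => (hcl m).isCompact) hcl
  obtain ⟨w, hw⟩ := this
  simp only [Set.mem_iInter, hC, Set.mem_inter_iff, Set.mem_setOf_eq] at hw
  refine ⟨w, (hw ⟨1, one_ne_zero⟩).1, ?_⟩
  exact Subtype.ext (funext fun m => (hw m).2)

theorem Gfun_surjective (f : Linv K) : ∃ x : Rhat (𝓞 K), Gfun K x = f := by
  set S : Rx (𝓞 K) → Set (Rhat (𝓞 K)) := fun m =>
    {x | Quot.mk (relCoset K m) (x.1 m) = f.1 m} with hS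
  have hsub : ∀ (l m n : Rx (𝓞 K)), (n : 𝓞 K) = l * m → S n ⊆ S m := by
    intro l m n hn x hx
    exact Linv_compat f l m n hn x hx
  have hdir : Directed (· ⊇ ·) S := by
    intro m₁ m₂
    refine ⟨⟨(m₁ : 𝓞 K) * m₂, mul_ne_zero m₁.2 m₂.2⟩, ?_, ?_⟩
    · exact hsub m₂ m₁ _ (mul_comm _ _)
    · exact hsub m₁ m₂ _ rfl
  have hne : ∀ m, (S m).Nonempty := by
    intro m
    obtain ⟨a, ha⟩ := Quot.exists_rep (f.1 m)
    obtain ⟨r, hr⟩ := Ideal.Quotient.mk_surjective a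
    refine ⟨diagHom (𝓞 K) r, ?_⟩
    show Quot.mk (relCoset K m) (Ideal.Quotient.mk _ r) = f.1 m
    rw [hr, ha]
  have hcl : ∀ m, IsClosed (S m) := by
    intro m
    have : S m = (fun x : Rhat (𝓞 K) => x.1 m) ⁻¹'
        {a | Quot.mk (relCoset K m) a = f.1 m} := rfl
    rw [this]
    exact IsClosed.preimage ((continuous_apply m).comp continuous_subtype_val)
      (isClosed_discrete _)
  have : (⋂ m, S m).Nonempty :=
    IsCompact.nonempty_iInter_of_directed_nonempty_isCompact_isClosed S hdir hne
      (fun m => (hcl m).isCompact) hcl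
  obtain ⟨x, hx⟩ := this
  simp only [Set.mem_iInter, hS, Set.mem_setOf_eq] at hx
  exact ⟨x, Subtype.ext (funext hx)⟩

end Aux

/-- the natural map `𝔬̂/∼ → lim_m (𝔬/(m))/∼`, sending the class of
`(r_m)_m` to the family of the classes of the `r_m`, is a well-defined homeomorphism
(where `𝔬̂/∼` carries the quotient topology and the inverse limit the subspace topology
from the product of the discrete quotients). -/
theorem quotient_homeo_inverse_limit (K : Type*) [Field K] [NumberField K] :
    ∃ F : Quot (relHat K) ≃ₜ Linv K,
      ∀ (x : Rhat (𝓞 K)) (m : Rx (𝓞 K)),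
        (F (Quot.mk (relHat K) x)).1 m = Quot.mk (relCoset K m) (x.1 m) := by
  have hbij : Function.Bijective
      (Quot.lift (Gfun K) Gfun_wd : Quot (relHat K) → Linv K) := by
    constructor
    · intro a b
      refine Quot.induction_on₂ a b fun x y h => ?_
      have h2 : Gfun K x = Gfun K y := h
      exact Quot.sound (Gfun_injective x y fun m => congrFun (congrArg Subtype.val h2) m)
    · intro f
      obtain ⟨x, hx⟩ := Gfun_surjective f
      exact ⟨Quot.mk _ x, hx⟩
  have hcont : Continuous (Quot.lift (Gfun K) Gfun_wd : Quot (relHat K) → Linv K) := by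
    refine continuous_quot_lift _ ?_
    refine Continuous.subtype_mk ?_ _
    exact continuous_pi fun m =>
      continuous_quot_mk.comp ((continuous_apply m).comp continuous_subtype_val)
  refine ⟨Continuous.homeoOfEquivCompactToT2 (f := Equiv.ofBijective _ hbij) hcont,
    fun x m => ?_⟩
  have hcoe : ⇑(Continuous.homeoOfEquivCompactToT2 (f := Equiv.ofBijective _ hbij) hcont)
      = (Quot.lift (Gfun K) Gfun_wd : Quot (relHat K) → Linv K) := rfl
  rw [hcoe]
  rfl
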